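/- arXiv:2301.09709 — 6 statements merged into one kernel-verified Lean document; each statement's English description precedes it below -/
import Mathlib

section
/- (Key Lemma) Let μ be the H-step lookahead policy with respect to V, i.e., T_μ T^{H−1} V = T^H V. Then ‖J^μ − T^{H−1} V‖_∞ ≤ (α^{H−1}/(1−α)) ‖TV − V‖_∞, where J^μ is the value function of policy μ. -/
/-- Key Lemma: if `μ` is the `H`-step lookahead policy w.r.t. `V`
(`T_μ T^{H−1} V = T^H V`), then
`‖J^μ − T^{H−1} V‖_∞ ≤ (α^{H−1}/(1−α)) ‖TV − V‖_∞`. -/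
theorem stmt3 {S : Type*} [Fintype S] [Nonempty S]
    (T Tmu : (S → ℝ) → (S → ℝ)) (α : ℝ) (hα : α ∈ Set.Ioo (0 : ℝ) 1)
    (hTcontr : ∀ J₁ J₂ : S → ℝ, ‖T J₁ - T J₂‖ ≤ α * ‖J₁ - J₂‖)
    (hTmucontr : ∀ J₁ J₂ : S → ℝ, ‖Tmu J₁ - Tmu J₂‖ ≤ α * ‖J₁ - J₂‖)
    (hTmono : ∀ J₁ J₂ : S → ℝ, J₁ ≤ J₂ → T J₁ ≤ T J₂)
    (hTmumono : ∀ J₁ J₂ : S → ℝ, J₁ ≤ J₂ → Tmu J₁ ≤ Tmu J₂)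
    (hTshift : ∀ (J : S → ℝ) (c : ℝ), T (fun i => J i + c) = fun i => T J i + α * c)
    (hTmushift : ∀ (J : S → ℝ) (c : ℝ), Tmu (fun i => J i + c) = fun i => Tmu J i + α * c)
    (Jmu : S → ℝ) (hJmu : Tmu Jmu = Jmu)
    (H : ℕ) (hH : 1 ≤ H) (V : S → ℝ)
    (hlookahead : Tmu (T^[H - 1] V) = T^[H] V) :
    ‖Jmu - T^[H - 1] V‖ ≤ α ^ (H - 1) / (1 - α) * ‖T V - V‖ := by
  obtain ⟨hα0, hα1⟩ := hα
  have hiter : ∀ (n : ℕ) (J₁ J₂ : S → ℝ), ‖T^[n] J₁ - T^[n] J₂‖ ≤ α ^ n * ‖J₁ - J₂‖ := by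
    intro n
    induction n with
    | zero => intro J₁ J₂; simp
    | succ n ih =>
      intro J₁ J₂
      rw [Function.iterate_succ_apply, Function.iterate_succ_apply]
      calc ‖T^[n] (T J₁) - T^[n] (T J₂)‖ ≤ α ^ n * ‖T J₁ - T J₂‖ := ih _ _
        _ ≤ α ^ n * (α * ‖J₁ - J₂‖) := by
            exact mul_le_mul_of_nonneg_left (hTcontr _ _) (by positivity)
        _ = α ^ (n + 1) * ‖J₁ - J₂‖ := by ring
  set d := ‖Jmu - T^[H - 1] V‖ with hd
  have hHsucc : H - 1 + 1 = H := Nat.succ_pred_eq_of_pos hH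
  have hstep : ‖T^[H] V - T^[H - 1] V‖ ≤ α ^ (H - 1) * ‖T V - V‖ := by
    have : T^[H] V = T^[H - 1] (T V) := by
      conv_lhs => rw [← hHsucc]
      rw [Function.iterate_succ_apply]
    rw [this]
    simpa using hiter (H - 1) (T V) V
  have htri : d ≤ ‖Jmu - Tmu (T^[H - 1] V)‖ + ‖Tmu (T^[H - 1] V) - T^[H - 1] V‖ := by
    simpa using norm_sub_le_norm_sub_add_norm_sub Jmu (Tmu (T^[H - 1] V)) (T^[H - 1] V)
  have h1 : ‖Jmu - Tmu (T^[H - 1] V)‖ ≤ α * d := by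
    have := hTmucontr Jmu (T^[H - 1] V)
    rwa [hJmu] at this
  have h2 : ‖Tmu (T^[H - 1] V) - T^[H - 1] V‖ ≤ α ^ (H - 1) * ‖T V - V‖ := by
    rw [hlookahead]; exact hstep
  have hkey : d ≤ α * d + α ^ (H - 1) * ‖T V - V‖ := htri.trans (add_le_add h1 h2)
  have h1α : (0:ℝ) < 1 - α := by linarith
  rw [div_mul_eq_mul_div, le_div_iff₀ h1α]
  nlinarith [hkey]
end

section
/- Let μ be the H-step lookahead policy with respect to V (T_μ T^{H−1}V = T^H V) and define H(V) := T_μ^m T^{H−1} V for m ≥ 1. Then ‖H(V) − T^{H−1}V‖_∞ ≤ (1 + α^m)(α^{H−1}/(1−α)) ‖TV − V‖_∞. -/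
/-- With `μ` the `H`-step lookahead policy w.r.t. `V` and `H(V) = T_μ^m T^{H−1} V`,
`‖H(V) − T^{H−1}V‖_∞ ≤ (1 + α^m)(α^{H−1}/(1−α)) ‖TV − V‖_∞`. -/
theorem stmt4 {S : Type*} [Fintype S] [Nonempty S]
    (T Tmu : (S → ℝ) → (S → ℝ)) (α : ℝ) (hα : α ∈ Set.Ioo (0 : ℝ) 1)
    (hTcontr : ∀ J₁ J₂ : S → ℝ, ‖T J₁ - T J₂‖ ≤ α * ‖J₁ - J₂‖)
    (hTmucontr : ∀ J₁ J₂ : S → ℝ, ‖Tmu J₁ - Tmu J₂‖ ≤ α * ‖J₁ - J₂‖)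
    (hTmono : ∀ J₁ J₂ : S → ℝ, J₁ ≤ J₂ → T J₁ ≤ T J₂)
    (hTmumono : ∀ J₁ J₂ : S → ℝ, J₁ ≤ J₂ → Tmu J₁ ≤ Tmu J₂)
    (hTshift : ∀ (J : S → ℝ) (c : ℝ), T (fun i => J i + c) = fun i => T J i + α * c)
    (hTmushift : ∀ (J : S → ℝ) (c : ℝ), Tmu (fun i => J i + c) = fun i => Tmu J i + α * c)
    (Jmu : S → ℝ) (hJmu : Tmu Jmu = Jmu)
    (H m : ℕ) (hH : 1 ≤ H) (hm : 1 ≤ m) (V : S → ℝ)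
    (hlookahead : Tmu (T^[H - 1] V) = T^[H] V) :
    ‖Tmu^[m] (T^[H - 1] V) - T^[H - 1] V‖
      ≤ (1 + α ^ m) * (α ^ (H - 1) / (1 - α)) * ‖T V - V‖ := by
  obtain ⟨hα0, hα1⟩ := hα
  set W := T^[H - 1] V with hW
  -- iterated contraction for T
  have hTiter : ∀ (n : ℕ) (A B : S → ℝ), ‖T^[n] A - T^[n] B‖ ≤ α ^ n * ‖A - B‖ := by
    intro n
    induction n with
    | zero => intro A B; simp
    | succ n ih =>
      intro A B
      rw [Function.iterate_succ_apply', Function.iterate_succ_apply']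
      calc ‖T (T^[n] A) - T (T^[n] B)‖ ≤ α * ‖T^[n] A - T^[n] B‖ := hTcontr _ _
        _ ≤ α * (α ^ n * ‖A - B‖) := by
            exact mul_le_mul_of_nonneg_left (ih A B) (le_of_lt hα0)
        _ = α ^ (n + 1) * ‖A - B‖ := by ring
  have hTmuiter : ∀ (n : ℕ) (A B : S → ℝ), ‖Tmu^[n] A - Tmu^[n] B‖ ≤ α ^ n * ‖A - B‖ := by
    intro n
    induction n with
    | zero => intro A B; simp
    | succ n ih =>
      intro A B
      rw [Function.iterate_succ_apply', Function.iterate_succ_apply']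
      calc ‖Tmu (Tmu^[n] A) - Tmu (Tmu^[n] B)‖ ≤ α * ‖Tmu^[n] A - Tmu^[n] B‖ := hTmucontr _ _
        _ ≤ α * (α ^ n * ‖A - B‖) := mul_le_mul_of_nonneg_left (ih A B) (le_of_lt hα0)
        _ = α ^ (n + 1) * ‖A - B‖ := by ring
  -- ‖T^[H] V - W‖ ≤ α^(H-1) ‖T V - V‖
  have hstep : ‖T^[H] V - W‖ ≤ α ^ (H - 1) * ‖T V - V‖ := by
    have hHsucc : H = (H - 1) + 1 := (Nat.succ_pred_eq_of_pos hH).symm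
    have : T^[H] V = T^[H - 1] (T V) := by
      conv_lhs => rw [hHsucc, Function.iterate_succ_apply]
    rw [this, hW]
    exact hTiter (H - 1) (T V) V
  -- key lemma: ‖Jmu - W‖ ≤ α^(H-1)/(1-α) ‖T V - V‖
  have hkey : ‖Jmu - W‖ ≤ α ^ (H - 1) / (1 - α) * ‖T V - V‖ := by
    have h1 : ‖Jmu - W‖ ≤ α * ‖Jmu - W‖ + α ^ (H - 1) * ‖T V - V‖ := by
      have hdecomp : Jmu - W = (Tmu Jmu - Tmu W) + (T^[H] V - W) := by
        rw [hJmu, hlookahead]; abel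
      calc ‖Jmu - W‖ = ‖(Tmu Jmu - Tmu W) + (T^[H] V - W)‖ := by rw [hdecomp]
        _ ≤ ‖Tmu Jmu - Tmu W‖ + ‖T^[H] V - W‖ := norm_add_le _ _
        _ ≤ α * ‖Jmu - W‖ + α ^ (H - 1) * ‖T V - V‖ :=
            add_le_add (hTmucontr _ _) hstep
    have h2 : (1 - α) * ‖Jmu - W‖ ≤ α ^ (H - 1) * ‖T V - V‖ := by nlinarith
    rw [div_mul_eq_mul_div, le_div_iff₀ (by linarith)]
    linarith [h2]
  -- final assembly
  have hfix : Tmu^[m] Jmu = Jmu := Function.iterate_fixed hJmu m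
  have h3 : ‖Tmu^[m] W - Jmu‖ ≤ α ^ m * ‖Jmu - W‖ := by
    calc ‖Tmu^[m] W - Jmu‖ = ‖Tmu^[m] W - Tmu^[m] Jmu‖ := by rw [hfix]
      _ ≤ α ^ m * ‖W - Jmu‖ := hTmuiter m W Jmu
      _ = α ^ m * ‖Jmu - W‖ := by rw [norm_sub_rev]
  have h4 : ‖Tmu^[m] W - W‖ ≤ ‖Tmu^[m] W - Jmu‖ + ‖Jmu - W‖ := by
    have : Tmu^[m] W - W = (Tmu^[m] W - Jmu) + (Jmu - W) := by abel
    rw [this]; exact norm_add_le _ _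
  have hαm : (0:ℝ) ≤ α ^ m := le_of_lt (pow_pos hα0 m)
  calc ‖Tmu^[m] W - W‖ ≤ ‖Tmu^[m] W - Jmu‖ + ‖Jmu - W‖ := h4
    _ ≤ α ^ m * ‖Jmu - W‖ + ‖Jmu - W‖ := by linarith [h3]
    _ = (1 + α ^ m) * ‖Jmu - W‖ := by ring
    _ ≤ (1 + α ^ m) * (α ^ (H - 1) / (1 - α) * ‖T V - V‖) := by
        exact mul_le_mul_of_nonneg_left hkey (by linarith)
    _ = (1 + α ^ m) * (α ^ (H - 1) / (1 - α)) * ‖T V - V‖ := by ring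
end

section
/- Let μ be the H-step lookahead policy with respect to V and H(V) := T_μ^m T^{H−1} V. Then ‖H(V) − J*‖_∞ ≤ (α^{H−1} + (1+α^m)(α^{H−1}/(1−α))(1+α)) ‖V − J*‖_∞, where J* is the optimal value function (fixed point of T). -/
/-- With `μ` the `H`-step lookahead policy w.r.t. `V` and `H(V) = T_μ^m T^{H−1} V`,
`‖H(V) − J*‖_∞ ≤ (α^{H−1} + (1+α^m)(α^{H−1}/(1−α))(1+α)) ‖V − J*‖_∞`. -/
theorem stmt5 {S : Type*} [Fintype S] [Nonempty S]
    (T Tmu : (S → ℝ) → (S → ℝ)) (α : ℝ) (hα : α ∈ Set.Ioo (0 : ℝ) 1)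
    (hTcontr : ∀ J₁ J₂ : S → ℝ, ‖T J₁ - T J₂‖ ≤ α * ‖J₁ - J₂‖)
    (hTmucontr : ∀ J₁ J₂ : S → ℝ, ‖Tmu J₁ - Tmu J₂‖ ≤ α * ‖J₁ - J₂‖)
    (hTmono : ∀ J₁ J₂ : S → ℝ, J₁ ≤ J₂ → T J₁ ≤ T J₂)
    (hTmumono : ∀ J₁ J₂ : S → ℝ, J₁ ≤ J₂ → Tmu J₁ ≤ Tmu J₂)
    (hTshift : ∀ (J : S → ℝ) (c : ℝ), T (fun i => J i + c) = fun i => T J i + α * c)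
    (hTmushift : ∀ (J : S → ℝ) (c : ℝ), Tmu (fun i => J i + c) = fun i => Tmu J i + α * c)
    (Jmu : S → ℝ) (hJmu : Tmu Jmu = Jmu)
    (Jstar : S → ℝ) (hJstar : T Jstar = Jstar)
    (H m : ℕ) (hH : 1 ≤ H) (hm : 1 ≤ m) (V : S → ℝ)
    (hlookahead : Tmu (T^[H - 1] V) = T^[H] V) :
    ‖Tmu^[m] (T^[H - 1] V) - Jstar‖
      ≤ (α ^ (H - 1) + (1 + α ^ m) * (α ^ (H - 1) / (1 - α)) * (1 + α))
          * ‖V - Jstar‖ := by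
  obtain ⟨hα0, hα1⟩ := hα
  set W := T^[H - 1] V with hW
  -- iterated contraction for T
  have Titer : ∀ (n : ℕ) (A B : S → ℝ), ‖T^[n] A - T^[n] B‖ ≤ α ^ n * ‖A - B‖ := by
    intro n
    induction n with
    | zero => intro A B; simp
    | succ n ih =>
      intro A B
      calc ‖T^[n+1] A - T^[n+1] B‖ = ‖T^[n] (T A) - T^[n] (T B)‖ := by
            simp [Function.iterate_succ_apply]
        _ ≤ α ^ n * ‖T A - T B‖ := ih _ _
        _ ≤ α ^ n * (α * ‖A - B‖) := by
            exact mul_le_mul_of_nonneg_left (hTcontr A B) (by positivity)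
        _ = α ^ (n+1) * ‖A - B‖ := by ring
  have Tmuiter : ∀ (n : ℕ) (A B : S → ℝ), ‖Tmu^[n] A - Tmu^[n] B‖ ≤ α ^ n * ‖A - B‖ := by
    intro n
    induction n with
    | zero => intro A B; simp
    | succ n ih =>
      intro A B
      calc ‖Tmu^[n+1] A - Tmu^[n+1] B‖ = ‖Tmu^[n] (Tmu A) - Tmu^[n] (Tmu B)‖ := by
            simp [Function.iterate_succ_apply]
        _ ≤ α ^ n * ‖Tmu A - Tmu B‖ := ih _ _
        _ ≤ α ^ n * (α * ‖A - B‖) := by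
            exact mul_le_mul_of_nonneg_left (hTmucontr A B) (by positivity)
        _ = α ^ (n+1) * ‖A - B‖ := by ring
  have hfix : ∀ n : ℕ, T^[n] Jstar = Jstar := fun n => Function.iterate_fixed hJstar n
  -- ‖W - Jstar‖ ≤ α^(H-1) ‖V - Jstar‖
  have hWJ : ‖W - Jstar‖ ≤ α ^ (H - 1) * ‖V - Jstar‖ := by
    have := Titer (H - 1) V Jstar
    rwa [hfix] at this
  -- ‖Tmu W - W‖ = ‖T^H V - T^{H-1} V‖ ≤ α^(H-1) ‖T V - V‖
  have hHsucc : H - 1 + 1 = H := Nat.succ_pred_eq_of_pos hH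
  have hTmuW : ‖Tmu W - W‖ ≤ α ^ (H - 1) * ‖T V - V‖ := by
    have h1 : Tmu W = T^[H - 1] (T V) := by
      rw [hlookahead]
      conv_lhs => rw [← hHsucc]
      rw [Function.iterate_succ_apply]
    rw [h1, hW]
    exact Titer (H - 1) (T V) V
  -- ‖T V - V‖ ≤ (1+α)‖V - Jstar‖
  have hTV : ‖T V - V‖ ≤ (1 + α) * ‖V - Jstar‖ := by
    have h2 : ‖T V - Jstar‖ ≤ α * ‖V - Jstar‖ := by
      have := hTcontr V Jstar; rwa [hJstar] at this
    have htri : ‖T V - V‖ ≤ ‖T V - Jstar‖ + ‖Jstar - V‖ := by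
      have h5 := norm_add_le (T V - Jstar) (Jstar - V)
      simpa using h5
    rw [norm_sub_rev Jstar V] at htri
    nlinarith [norm_nonneg (V - Jstar)]
  -- ‖Tmu^[m] W - W‖ ≤ (∑_{k<m} α^k) ‖Tmu W - W‖
  have key : ∀ n : ℕ, ‖Tmu^[n] W - W‖ ≤ (∑ k ∈ Finset.range n, α ^ k) * ‖Tmu W - W‖ := by
    intro n
    induction n with
    | zero => simp
    | succ n ih =>
      calc ‖Tmu^[n+1] W - W‖
          = ‖(Tmu^[n] (Tmu W) - Tmu^[n] W) + (Tmu^[n] W - W)‖ := by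
            rw [Function.iterate_succ_apply]; ring_nf
        _ ≤ ‖Tmu^[n] (Tmu W) - Tmu^[n] W‖ + ‖Tmu^[n] W - W‖ := norm_add_le _ _
        _ ≤ α ^ n * ‖Tmu W - W‖ + (∑ k ∈ Finset.range n, α ^ k) * ‖Tmu W - W‖ := by
            have := Tmuiter n (Tmu W) W; linarith
        _ = (∑ k ∈ Finset.range (n+1), α ^ k) * ‖Tmu W - W‖ := by
            rw [Finset.sum_range_succ]; ring
  have hsum : (∑ k ∈ Finset.range m, α ^ k) ≤ (1 + α ^ m) / (1 - α) := by
    rw [geom_sum_eq (ne_of_lt hα1)]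
    have hαm : (0:ℝ) ≤ α ^ m := by positivity
    have h4 : (α ^ m - 1) / (α - 1) = (1 - α ^ m) / (1 - α) := by
      rw [div_eq_div_iff (by linarith) (by linarith)]; ring
    rw [h4]
    apply div_le_div_of_nonneg_right ?_ (by linarith)
    · linarith
  -- combine
  have hnn : (0:ℝ) ≤ ‖Tmu W - W‖ := norm_nonneg _
  have hVJ : (0:ℝ) ≤ ‖V - Jstar‖ := norm_nonneg _
  have hαH : (0:ℝ) ≤ α ^ (H - 1) := by positivity
  have hαm : (0:ℝ) ≤ α ^ m := by positivity
  have hsum0 : (0:ℝ) ≤ ∑ k ∈ Finset.range m, α ^ k := by positivity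
  have hmain : ‖Tmu^[m] W - W‖ ≤ (1 + α ^ m) * (α ^ (H - 1) / (1 - α)) * ((1 + α) * ‖V - Jstar‖) := by
    have h3 : ‖Tmu W - W‖ ≤ α ^ (H - 1) * ((1 + α) * ‖V - Jstar‖) := by
      calc ‖Tmu W - W‖ ≤ α ^ (H - 1) * ‖T V - V‖ := hTmuW
        _ ≤ α ^ (H - 1) * ((1 + α) * ‖V - Jstar‖) :=
            mul_le_mul_of_nonneg_left hTV hαH
    calc ‖Tmu^[m] W - W‖ ≤ (∑ k ∈ Finset.range m, α ^ k) * ‖Tmu W - W‖ := key m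
      _ ≤ ((1 + α ^ m) / (1 - α)) * (α ^ (H - 1) * ((1 + α) * ‖V - Jstar‖)) := by
          have hpos : (0:ℝ) < 1 - α := by linarith
          apply mul_le_mul hsum h3 hnn (by positivity)
      _ = (1 + α ^ m) * (α ^ (H - 1) / (1 - α)) * ((1 + α) * ‖V - Jstar‖) := by ring
  calc ‖Tmu^[m] W - Jstar‖ = ‖(Tmu^[m] W - W) + (W - Jstar)‖ := by ring_nf
    _ ≤ ‖Tmu^[m] W - W‖ + ‖W - Jstar‖ := norm_add_le _ _
    _ ≤ (1 + α ^ m) * (α ^ (H - 1) / (1 - α)) * ((1 + α) * ‖V - Jstar‖)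
        + α ^ (H - 1) * ‖V - Jstar‖ := by linarith
    _ = (α ^ (H - 1) + (1 + α ^ m) * (α ^ (H - 1) / (1 - α)) * (1 + α)) * ‖V - Jstar‖ := by ring
end

section
/- Policy error bound from value error: suppose ‖V − J*‖_∞ ≤ Δ and μ is the H-step lookahead policy with respect to V (T_μ T^{H−1}V = T^H V). Then ‖J^μ − J*‖_∞ ≤ 2α^{H−1}Δ/(1−α). -/
/-- Policy error bound from value error: if `‖V − J*‖_∞ ≤ Δ` and `μ` is the
`H`-step lookahead policy w.r.t. `V`, then `‖J^μ − J*‖_∞ ≤ 2α^{H−1}Δ/(1−α)`. -/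
theorem stmt11 {S : Type*} [Fintype S] [Nonempty S]
    (T Tmu : (S → ℝ) → (S → ℝ)) (α : ℝ) (hα : α ∈ Set.Ioo (0 : ℝ) 1)
    (hTcontr : ∀ J₁ J₂ : S → ℝ, ‖T J₁ - T J₂‖ ≤ α * ‖J₁ - J₂‖)
    (hTmucontr : ∀ J₁ J₂ : S → ℝ, ‖Tmu J₁ - Tmu J₂‖ ≤ α * ‖J₁ - J₂‖)
    (hTmono : ∀ J₁ J₂ : S → ℝ, J₁ ≤ J₂ → T J₁ ≤ T J₂)
    (hTmumono : ∀ J₁ J₂ : S → ℝ, J₁ ≤ J₂ → Tmu J₁ ≤ Tmu J₂)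
    (hTshift : ∀ (J : S → ℝ) (c : ℝ), T (fun i => J i + c) = fun i => T J i + α * c)
    (hTmushift : ∀ (J : S → ℝ) (c : ℝ), Tmu (fun i => J i + c) = fun i => Tmu J i + α * c)
    (Jmu : S → ℝ) (hJmu : Tmu Jmu = Jmu)
    (Jstar : S → ℝ) (hJstar : T Jstar = Jstar)
    (hJstarmin : Jstar ≤ Jmu)
    (H : ℕ) (hH : 1 ≤ H) (V : S → ℝ) (Δ : ℝ)
    (hV : ‖V - Jstar‖ ≤ Δ)
    (hlookahead : Tmu (T^[H - 1] V) = T^[H] V) :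
    ‖Jmu - Jstar‖ ≤ 2 * α ^ (H - 1) * Δ / (1 - α) := by
  obtain ⟨hα0, hα1⟩ := hα
  have hΔ0 : 0 ≤ Δ := le_trans (norm_nonneg _) hV
  set W : S → ℝ := T^[H - 1] V with hWdef
  -- iterate contraction
  have hiter : ∀ n : ℕ, ‖T^[n] V - Jstar‖ ≤ α ^ n * Δ := by
    intro n
    induction n with
    | zero => simpa using hV
    | succ n ih =>
        have h1 : T^[n + 1] V = T (T^[n] V) := Function.iterate_succ_apply' T n V
        have h2 : ‖T (T^[n] V) - T Jstar‖ ≤ α * ‖T^[n] V - Jstar‖ := hTcontr _ _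
        rw [h1]
        calc ‖T (T^[n] V) - Jstar‖ = ‖T (T^[n] V) - T Jstar‖ := by rw [hJstar]
          _ ≤ α * ‖T^[n] V - Jstar‖ := h2
          _ ≤ α * (α ^ n * Δ) := by
              exact mul_le_mul_of_nonneg_left ih (le_of_lt hα0)
          _ = α ^ (n + 1) * Δ := by ring
  have hW : ‖W - Jstar‖ ≤ α ^ (H - 1) * Δ := hiter (H - 1)
  -- Tmu W = T W
  have hTmuW : Tmu W = T W := by
    have : T^[H] V = T (T^[H - 1] V) := by
      conv_lhs => rw [show H = (H - 1) + 1 from (Nat.succ_pred_eq_of_pos hH).symm]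
      exact Function.iterate_succ_apply' T (H - 1) V
    rw [hlookahead, this]
  -- ‖T W - W‖ bound
  have hTW : ‖T W - W‖ ≤ (1 + α) * (α ^ (H - 1) * Δ) := by
    have h1 : ‖T W - Jstar‖ ≤ α * (α ^ (H - 1) * Δ) := by
      calc ‖T W - Jstar‖ = ‖T W - T Jstar‖ := by rw [hJstar]
        _ ≤ α * ‖W - Jstar‖ := hTcontr _ _
        _ ≤ α * (α ^ (H - 1) * Δ) := mul_le_mul_of_nonneg_left hW (le_of_lt hα0)
    calc ‖T W - W‖ ≤ ‖T W - Jstar‖ + ‖Jstar - W‖ := by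
          simpa using norm_sub_le_norm_sub_add_norm_sub (T W) Jstar W
      _ = ‖T W - Jstar‖ + ‖W - Jstar‖ := by rw [norm_sub_rev Jstar W]
      _ ≤ α * (α ^ (H - 1) * Δ) + α ^ (H - 1) * Δ := add_le_add h1 hW
      _ = (1 + α) * (α ^ (H - 1) * Δ) := by ring
  -- fixed point distance
  have hfix : (1 - α) * ‖Jmu - W‖ ≤ ‖T W - W‖ := by
    have h1 : ‖Jmu - W‖ ≤ ‖Jmu - Tmu W‖ + ‖Tmu W - W‖ :=
      norm_sub_le_norm_sub_add_norm_sub Jmu (Tmu W) W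
    have h2 : ‖Jmu - Tmu W‖ ≤ α * ‖Jmu - W‖ := by
      calc ‖Jmu - Tmu W‖ = ‖Tmu Jmu - Tmu W‖ := by rw [hJmu]
        _ ≤ α * ‖Jmu - W‖ := hTmucontr _ _
    rw [hTmuW] at h1 h2
    nlinarith [h1, h2]
  have h1α : (0 : ℝ) < 1 - α := by linarith
  have hJmuW : ‖Jmu - W‖ ≤ (1 + α) * (α ^ (H - 1) * Δ) / (1 - α) := by
    rw [le_div_iff₀ h1α, mul_comm]
    exact le_trans hfix hTW
  have hpow : (0 : ℝ) ≤ α ^ (H - 1) * Δ := by positivity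
  calc ‖Jmu - Jstar‖ ≤ ‖Jmu - W‖ + ‖W - Jstar‖ :=
        norm_sub_le_norm_sub_add_norm_sub Jmu W Jstar
    _ ≤ (1 + α) * (α ^ (H - 1) * Δ) / (1 - α) + α ^ (H - 1) * Δ := add_le_add hJmuW hW
    _ = 2 * α ^ (H - 1) * Δ / (1 - α) := by field_simp; ring
end

section
/- Gradient descent on least squares converges linearly to the minimum-norm solution: let A ∈ ℝ^{p×d} with thin SVD A = U Σ₁ V₁ᵀ (Σ₁ invertible), b ∈ ℝ^p, and iterates θ_ℓ = θ_{ℓ−1} − ξ Aᵀ(Aθ_{ℓ−1} − b) with θ_0 = 0 and 0 < ξ σ_max < 1 where σ_max is the largest squared singular value of A. Then with θ* := A⁺b = V₁ Σ₁^{-1} Uᵀ b, ‖θ_η − θ*‖_∞ ≤ (1 − ξ σ_min)^η ‖V₁‖_∞ ‖Σ₁^{-1}‖_∞ ‖Uᵀ b‖_∞ for the minimum squared singular value σ_min (and in particular the error decays geometrically). -/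
open Matrix

/-- Induced `∞`-norm of a matrix (maximum absolute row sum). -/
noncomputable def rowSumNorm {a b : ℕ} (M : Matrix (Fin a) (Fin b) ℝ) : ℝ :=
  ⨆ i, ∑ j, |M i j|

/-- Gradient descent on least squares converges linearly to the minimum-norm
solution `θ* = A⁺b = V₁ Σ₁⁻¹ Uᵀ b`:
`‖θ_η − θ*‖_∞ ≤ (1 − ξ σ_min)^η ‖V₁‖_∞ ‖Σ₁⁻¹‖_∞ ‖Uᵀ b‖_∞`. -/
theorem stmt14 {p d r : ℕ} [NeZero p] [NeZero d] [NeZero r]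
    (A : Matrix (Fin p) (Fin d) ℝ) (b : Fin p → ℝ)
    (U : Matrix (Fin p) (Fin r) ℝ) (V₁ : Matrix (Fin d) (Fin r) ℝ)
    (σ : Fin r → ℝ) (hσpos : ∀ i, 0 < σ i)
    (hU : Uᵀ * U = 1) (hV : V₁ᵀ * V₁ = 1)
    (hSVD : A = U * Matrix.diagonal σ * V₁ᵀ)
    (σmax σmin : ℝ)
    (hσmax : IsGreatest (Set.range fun i => σ i ^ 2) σmax)
    (hσmin : IsLeast (Set.range fun i => σ i ^ 2) σmin)
    (ξ : ℝ) (hξpos : 0 < ξ) (hξ : 0 < ξ * σmax ∧ ξ * σmax < 1)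
    (θ : ℕ → Fin d → ℝ) (hθ0 : θ 0 = 0)
    (hθrec : ∀ ℓ, θ (ℓ + 1) = θ ℓ - ξ • Aᵀ.mulVec (A.mulVec (θ ℓ) - b))
    (θstar : Fin d → ℝ)
    (hθstar : θstar = (V₁ * (Matrix.diagonal σ)⁻¹ * Uᵀ).mulVec b) :
    ∀ η : ℕ, ‖θ η - θstar‖
      ≤ (1 - ξ * σmin) ^ η * rowSumNorm V₁ * rowSumNorm (Matrix.diagonal σ)⁻¹
          * ‖Uᵀ.mulVec b‖ := by
  have hσne : ∀ i, σ i ≠ 0 := fun i => (hσpos i).ne'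
  have hDinv : (Matrix.diagonal σ)⁻¹ = Matrix.diagonal (fun i => (σ i)⁻¹) := by
    apply Matrix.inv_eq_right_inv
    rw [Matrix.diagonal_mul_diagonal]
    have h1 : (fun i => σ i * (σ i)⁻¹) = fun _ => (1:ℝ) :=
      funext fun i => mul_inv_cancel₀ (hσne i)
    rw [h1, Matrix.diagonal_one]
  have hUc : ∀ {k : ℕ} (X : Matrix (Fin r) (Fin k) ℝ), Uᵀ * (U * X) = X := by
    intro k X; rw [← Matrix.mul_assoc, hU, Matrix.one_mul]
  have hVc : ∀ {k : ℕ} (X : Matrix (Fin r) (Fin k) ℝ), V₁ᵀ * (V₁ * X) = X := by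
    intro k X; rw [← Matrix.mul_assoc, hV, Matrix.one_mul]
  have hAT : Aᵀ = V₁ * (Matrix.diagonal σ * Uᵀ) := by
    rw [hSVD]
    simp [Matrix.transpose_mul, Matrix.diagonal_transpose, Matrix.mul_assoc]
  have hATA : Aᵀ * A = V₁ * (Matrix.diagonal (fun j => σ j ^ 2) * V₁ᵀ) := by
    rw [hAT, hSVD]
    simp only [Matrix.mul_assoc]
    rw [hUc, ← Matrix.mul_assoc (Matrix.diagonal σ), Matrix.diagonal_mul_diagonal]
    congr 2
    funext j; ring
  set w := Uᵀ.mulVec b with hw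
  -- closed form
  have key : ∀ η, θ η - θstar =
      -((V₁ * Matrix.diagonal (fun j => (1 - ξ * σ j ^ 2) ^ η * (σ j)⁻¹)).mulVec w) := by
    intro η
    induction η with
    | zero =>
      rw [hθ0, hθstar, hDinv, zero_sub, hw]
      congr 1
      simp only [pow_zero, one_mul]
      rw [Matrix.mulVec_mulVec]
    | succ n ih =>
      have hrec := hθrec n
      have hATAv : ∀ v, Aᵀ.mulVec (A.mulVec v) = (Aᵀ * A).mulVec v := by
        intro v; rw [Matrix.mulVec_mulVec]
      have hd : (fun j => σ j ^ 2 * (σ j)⁻¹) = σ := by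
        funext j
        rw [sq, mul_assoc, mul_inv_cancel₀ (hσne j), mul_one]
      have hfix : (Aᵀ * A).mulVec θstar = Aᵀ.mulVec b := by
        rw [hθstar, hDinv, Matrix.mulVec_mulVec, hATA, hAT]
        congr 1
        simp only [Matrix.mul_assoc]
        rw [hVc, ← Matrix.mul_assoc (Matrix.diagonal fun j => σ j ^ 2),
          Matrix.diagonal_mul_diagonal, hd]
      have step : θ (n + 1) - θstar = (θ n - θstar) - ξ • (Aᵀ * A).mulVec (θ n - θstar) := by
        rw [hrec, Matrix.mulVec_sub, hATAv, Matrix.mulVec_sub, hfix]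
        abel
      rw [step, ih]
      have hmul : (Aᵀ * A).mulVec
          ((V₁ * Matrix.diagonal (fun j => (1 - ξ * σ j ^ 2) ^ n * (σ j)⁻¹)).mulVec w)
          = (V₁ * Matrix.diagonal (fun j => σ j ^ 2 * ((1 - ξ * σ j ^ 2) ^ n * (σ j)⁻¹))).mulVec w := by
        rw [Matrix.mulVec_mulVec, hATA]
        congr 1
        simp only [Matrix.mul_assoc]
        rw [hVc, Matrix.diagonal_mul_diagonal]
      rw [Matrix.mulVec_neg, smul_neg, hmul]
      have hdd : (V₁ * Matrix.diagonal fun j => (1 - ξ * σ j ^ 2) ^ (n + 1) * (σ j)⁻¹) =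
          (V₁ * Matrix.diagonal fun j => (1 - ξ * σ j ^ 2) ^ n * (σ j)⁻¹)
          - ξ • (V₁ * Matrix.diagonal fun j => σ j ^ 2 * ((1 - ξ * σ j ^ 2) ^ n * (σ j)⁻¹)) := by
        rw [← Matrix.mul_smul, ← Matrix.mul_sub]
        congr 1
        rw [← Matrix.diagonal_smul, Matrix.diagonal_sub]
        exact congrArg Matrix.diagonal (funext fun j => by
          simp only [Pi.smul_apply, smul_eq_mul]; ring)
      rw [hdd, Matrix.sub_mulVec, Matrix.smul_mulVec]
      abel
  -- now the bound
  intro η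
  have hminmem := hσmin.1
  have hminle : ∀ j, σmin ≤ σ j ^ 2 := fun j => hσmin.2 ⟨j, rfl⟩
  have hmaxge : ∀ j, σ j ^ 2 ≤ σmax := fun j => hσmax.2 ⟨j, rfl⟩
  obtain ⟨j₀, hj₀⟩ := hminmem
  have hσminpos : 0 < σmin := hj₀ ▸ pow_pos (hσpos j₀) 2
  have hc0 : (0:ℝ) ≤ 1 - ξ * σmin := by
    have h1 : ξ * σmin ≤ ξ * σmax :=
      mul_le_mul_of_nonneg_left (hj₀ ▸ hmaxge j₀) hξpos.le
    linarith [hξ.2]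
  set c := (1 - ξ * σmin) ^ η with hc
  have hcpos : 0 ≤ c := pow_nonneg hc0 η
  -- row sums bounds
  have hbdd1 : BddAbove (Set.range fun i => ∑ j, |V₁ i j|) :=
    Set.Finite.bddAbove (Set.finite_range _)
  have hR1 : ∀ i, ∑ j, |V₁ i j| ≤ rowSumNorm V₁ := fun i => le_ciSup hbdd1 i
  have hR1nn : 0 ≤ rowSumNorm V₁ :=
    le_trans (Finset.sum_nonneg fun j _ => abs_nonneg _) (hR1 ⟨0, Nat.pos_of_neZero d⟩)
  have hDrow : ∀ i : Fin r, ∑ j, |(Matrix.diagonal σ)⁻¹ i j| = (σ i)⁻¹ := by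
    intro i
    rw [hDinv]
    rw [Finset.sum_eq_single i]
    · rw [Matrix.diagonal_apply_eq, abs_of_pos (inv_pos.mpr (hσpos i))]
    · intro j _ hj
      rw [Matrix.diagonal_apply_ne' _ hj, abs_zero]
    · simp
  have hbdd2 : BddAbove (Set.range fun i => ∑ j, |(Matrix.diagonal σ)⁻¹ i j|) :=
    Set.Finite.bddAbove (Set.finite_range _)
  have hR2 : ∀ i : Fin r, (σ i)⁻¹ ≤ rowSumNorm (Matrix.diagonal σ)⁻¹ := by
    intro i
    rw [← hDrow i]
    exact le_ciSup hbdd2 i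
  have hR2nn : 0 ≤ rowSumNorm (Matrix.diagonal σ)⁻¹ :=
    le_trans (inv_pos.mpr (hσpos ⟨0, Nat.pos_of_neZero r⟩)).le (hR2 _)
  have hwnn : 0 ≤ ‖w‖ := norm_nonneg _
  rw [key η]
  rw [pi_norm_le_iff_of_nonneg (by positivity)]
  intro i
  rw [Pi.neg_apply, norm_neg]
  have hentry : ((V₁ * Matrix.diagonal fun j => (1 - ξ * σ j ^ 2) ^ η * (σ j)⁻¹).mulVec w) i
      = ∑ j, V₁ i j * ((1 - ξ * σ j ^ 2) ^ η * (σ j)⁻¹) * w j := by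
    simp [Matrix.mulVec, dotProduct, Matrix.mul_diagonal]
  rw [hentry]
  have hterm : ∀ j, |V₁ i j * ((1 - ξ * σ j ^ 2) ^ η * (σ j)⁻¹) * w j|
      ≤ |V₁ i j| * (c * rowSumNorm (Matrix.diagonal σ)⁻¹ * ‖w‖) := by
    intro j
    rw [abs_mul, abs_mul]
    have hf0 : 0 ≤ 1 - ξ * σ j ^ 2 := by
      have := mul_le_mul_of_nonneg_left (hmaxge j) hξpos.le
      linarith [hξ.2]
    have hfle : (1 - ξ * σ j ^ 2) ^ η ≤ c := by
      apply pow_le_pow_left₀ hf0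
      have := mul_le_mul_of_nonneg_left (hminle j) hξpos.le
      linarith
    have habs : |(1 - ξ * σ j ^ 2) ^ η * (σ j)⁻¹| ≤ c * rowSumNorm (Matrix.diagonal σ)⁻¹ := by
      rw [abs_mul, abs_of_nonneg (pow_nonneg hf0 η),
        abs_of_pos (inv_pos.mpr (hσpos j))]
      exact mul_le_mul hfle (hR2 j) (inv_pos.mpr (hσpos j)).le hcpos
    have hwj : |w j| ≤ ‖w‖ := by
      simpa [Real.norm_eq_abs] using norm_le_pi_norm w j
    calc |V₁ i j| * |(1 - ξ * σ j ^ 2) ^ η * (σ j)⁻¹| * |w j|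
        ≤ |V₁ i j| * (c * rowSumNorm (Matrix.diagonal σ)⁻¹) * ‖w‖ := by
          apply mul_le_mul (mul_le_mul_of_nonneg_left habs (abs_nonneg _)) hwj (abs_nonneg _)
          positivity
      _ = |V₁ i j| * (c * rowSumNorm (Matrix.diagonal σ)⁻¹ * ‖w‖) := by ring
  calc ‖∑ j, V₁ i j * ((1 - ξ * σ j ^ 2) ^ η * (σ j)⁻¹) * w j‖
      ≤ ∑ j, |V₁ i j * ((1 - ξ * σ j ^ 2) ^ η * (σ j)⁻¹) * w j| := by
        rw [Real.norm_eq_abs]; exact Finset.abs_sum_le_sum_abs _ _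
    _ ≤ ∑ j, |V₁ i j| * (c * rowSumNorm (Matrix.diagonal σ)⁻¹ * ‖w‖) :=
        Finset.sum_le_sum fun j _ => hterm j
    _ = (∑ j, |V₁ i j|) * (c * rowSumNorm (Matrix.diagonal σ)⁻¹ * ‖w‖) := by
        rw [← Finset.sum_mul]
    _ ≤ rowSumNorm V₁ * (c * rowSumNorm (Matrix.diagonal σ)⁻¹ * ‖w‖) := by
        apply mul_le_mul_of_nonneg_right (hR1 i)
        positivity
    _ = c * rowSumNorm V₁ * rowSumNorm (Matrix.diagonal σ)⁻¹ * ‖w‖ := by ring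
end

section
/- If ‖TV − V‖_∞ ≤ ε̃, then T_μ^m T^{H−1}V ≤ T^{H−1}V + (α^{H−1}/(1−α)) ε̃ · e componentwise, where μ is the H-step lookahead policy with respect to V (T_μ T^{H−1}V = T^H V). -/
/-- If `‖TV − V‖_∞ ≤ ε̃` and `μ` is the `H`-step lookahead policy w.r.t. `V`,
then componentwise `T_μ^m T^{H−1}V ≤ T^{H−1}V + (α^{H−1}/(1−α)) ε̃ · e`. -/
theorem stmt19 {S : Type*} [Fintype S] [Nonempty S]
    (T Tmu : (S → ℝ) → (S → ℝ)) (α : ℝ) (hα : α ∈ Set.Ioo (0 : ℝ) 1)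
    (hTcontr : ∀ J₁ J₂ : S → ℝ, ‖T J₁ - T J₂‖ ≤ α * ‖J₁ - J₂‖)
    (hTmucontr : ∀ J₁ J₂ : S → ℝ, ‖Tmu J₁ - Tmu J₂‖ ≤ α * ‖J₁ - J₂‖)
    (hTmono : ∀ J₁ J₂ : S → ℝ, J₁ ≤ J₂ → T J₁ ≤ T J₂)
    (hTmumono : ∀ J₁ J₂ : S → ℝ, J₁ ≤ J₂ → Tmu J₁ ≤ Tmu J₂)
    (hTshift : ∀ (J : S → ℝ) (c : ℝ), T (fun i => J i + c) = fun i => T J i + α * c)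
    (hTmushift : ∀ (J : S → ℝ) (c : ℝ), Tmu (fun i => J i + c) = fun i => Tmu J i + α * c)
    (H m : ℕ) (hH : 1 ≤ H) (hm : 1 ≤ m) (V : S → ℝ) (ε : ℝ)
    (hε : ‖T V - V‖ ≤ ε)
    (hlookahead : Tmu (T^[H - 1] V) = T^[H] V) :
    ∀ i, Tmu^[m] (T^[H - 1] V) i ≤ T^[H - 1] V i + α ^ (H - 1) / (1 - α) * ε := by
  obtain ⟨hα0, hα1⟩ := hα
  have hε0 : 0 ≤ ε := le_trans (norm_nonneg _) hε
  -- pointwise bound: T V ≤ V + ε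
  have hTVle : T V ≤ fun i => V i + ε := by
    intro i
    have := norm_le_pi_norm (T V - V) i
    have h2 : |T V i - V i| ≤ ε := le_trans this hε
    have h3 := (abs_le.mp h2).2
    show T V i ≤ V i + ε
    linarith
  -- step up: T^[k+1] V ≤ T^[k] V + α^k ε
  have hstep : ∀ k : ℕ, T^[k+1] V ≤ fun i => T^[k] V i + α ^ k * ε := by
    intro k
    induction k with
    | zero => simpa using hTVle
    | succ k ih =>
      have h1 : T (T^[k+1] V) ≤ T (fun i => T^[k] V i + α ^ k * ε) := hTmono _ _ ih
      rw [hTshift] at h1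
      intro i
      have := h1 i
      calc T^[k+1+1] V i = T (T^[k+1] V) i := by rw [Function.iterate_succ_apply']
        _ ≤ T (T^[k] V) i + α * (α ^ k * ε) := this
        _ = T^[k+1] V i + α ^ (k+1) * ε := by
            rw [Function.iterate_succ_apply']; ring
  -- key: Tmu W ≤ W + c with W = T^[H-1] V, c = α^(H-1) ε
  set W := T^[H - 1] V with hW
  set c : ℝ := α ^ (H - 1) * ε with hc
  have hc0 : 0 ≤ c := mul_nonneg (pow_nonneg hα0.le _) hε0
  have hkey : Tmu W ≤ fun i => W i + c := by
    rw [hlookahead]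
    have : H = (H - 1) + 1 := (Nat.succ_pred_eq_of_pos hH).symm
    rw [this]
    exact hstep (H - 1)
  -- iterate: Tmu^[n] W ≤ W + (∑ j < n, α^j) c
  have hiter : ∀ n : ℕ, Tmu^[n] W ≤ fun i => W i + (∑ j ∈ Finset.range n, α ^ j) * c := by
    intro n
    induction n with
    | zero => intro i; simp
    | succ n ih =>
      have h1 : Tmu (Tmu^[n] W) ≤ Tmu (fun i => W i + (∑ j ∈ Finset.range n, α ^ j) * c) :=
        hTmumono _ _ ih
      rw [hTmushift] at h1
      intro i
      have h2 : Tmu (Tmu^[n] W) i ≤ Tmu W i + α * ((∑ j ∈ Finset.range n, α ^ j) * c) := by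
        simpa using h1 i
      have h3 : Tmu W i ≤ W i + c := by simpa using hkey i
      calc Tmu^[n+1] W i = Tmu (Tmu^[n] W) i := by rw [Function.iterate_succ_apply']
        _ ≤ Tmu W i + α * ((∑ j ∈ Finset.range n, α ^ j) * c) := h2
        _ ≤ W i + c + α * ((∑ j ∈ Finset.range n, α ^ j) * c) := by linarith
        _ = W i + (∑ j ∈ Finset.range (n+1), α ^ j) * c := by
            rw [geom_sum_succ]; ring
  -- geometric sum bound
  have hsum : (∑ j ∈ Finset.range m, α ^ j) ≤ 1 / (1 - α) := by
    rw [le_div_iff₀ (by linarith)]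
    have h := geom_sum_mul α m
    have : (∑ j ∈ Finset.range m, α ^ j) * (1 - α) = 1 - α ^ m := by
      nlinarith [h]
    rw [this]
    nlinarith [pow_nonneg hα0.le m]
  intro i
  have h1 : Tmu^[m] W i ≤ W i + (∑ j ∈ Finset.range m, α ^ j) * c := by
    simpa using hiter m i
  have h2 : (∑ j ∈ Finset.range m, α ^ j) * c ≤ (1 / (1 - α)) * c :=
    mul_le_mul_of_nonneg_right hsum hc0
  have : (1 / (1 - α)) * c = α ^ (H - 1) / (1 - α) * ε := by rw [hc]; ring
  linarith
end
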